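/- arXiv:2505.05808 — 3 statements merged into one kernel-verified Lean document; each statement's English description precedes it below -/
import Mathlib

section
/- Let 0 < λ < 1/2 and let F_λ be the middle (1−2λ) Cantor set with gap intervals (a_{k,i}, b_{k,i}) at step k (ordered so that a_{k,1} < a_{k,2} < ⋯ < a_{k,2^{k−1}}). Then the gap interval of F_λ² = {x² : x ∈ F_λ} of maximal length is (λ², (1−λ)²), i.e., for every k ≥ 1 and 1 ≤ i ≤ 2^{k−1} one has b_{k,i}² − a_{k,i}² ≤ (1−λ)² − λ². -/
open Set

/-- `wordMap l σ x = (f_{i₁} ∘ ⋯ ∘ f_{iₙ})(x)` where `f₀(x) = l x`, `f₁(x) = l x + (1-l)`. -/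
noncomputable def wordMap (l : ℝ) (σ : List Bool) (x : ℝ) : ℝ :=
  σ.foldr (fun b y => l * y + (if b then 1 - l else 0)) x

lemma wordMap_affine (l : ℝ) (σ : List Bool) (x : ℝ) :
    wordMap l σ x = l ^ σ.length * x + wordMap l σ 0 := by
  induction σ with
  | nil => simp [wordMap]
  | cons b σ ih =>
      simp only [wordMap, List.foldr_cons, List.length_cons] at *
      rw [ih]
      ring

lemma wordMap_bounds (l : ℝ) (h0 : 0 < l) (h1 : l < 1 / 2) (σ : List Bool) (x : ℝ)
    (hx0 : 0 ≤ x) (hx1 : x ≤ 1) : 0 ≤ wordMap l σ x ∧ wordMap l σ x ≤ 1 := by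
  induction σ with
  | nil => exact ⟨hx0, hx1⟩
  | cons b σ ih =>
      obtain ⟨h2, h3⟩ := ih
      simp only [wordMap, List.foldr_cons] at *
      constructor
      · cases b <;> simp <;> nlinarith
      · cases b <;> simp <;> nlinarith

/-- Every gap `(a², b²)` of `F_λ²` has length at most `(1-λ)² - λ²`,
the length of the squared first gap `(λ², (1-λ)²)`. -/
theorem stmt3 (l : ℝ) (h0 : 0 < l) (h1 : l < 1 / 2) (σ : List Bool) :
    (wordMap l σ (1 - l)) ^ 2 - (wordMap l σ l) ^ 2 ≤ (1 - l) ^ 2 - l ^ 2 := by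
  set n := σ.length
  set c := wordMap l σ 0 with hc
  have hA := wordMap_affine l σ l
  have hB := wordMap_affine l σ (1 - l)
  have hc0 : 0 ≤ c := (wordMap_bounds l h0 h1 σ 0 le_rfl zero_le_one).1
  have hc1 : l ^ n * 1 + c ≤ 1 := by
    rw [← wordMap_affine l σ 1]
    exact (wordMap_bounds l h0 h1 σ 1 zero_le_one le_rfl).2
  have hln : 0 < l ^ n := pow_pos h0 n
  rw [hA, hB]
  have h2l : (0:ℝ) ≤ 1 - 2 * l := by linarith
  have hcc : c ≤ 1 - l ^ n := by linarith
  nlinarith [mul_nonneg h2l (sq_nonneg (1 - l ^ n)),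
    mul_nonneg (mul_nonneg h2l hln.le) (by linarith : (0:ℝ) ≤ 1 - l ^ n - c)]
end

section
/- Let 0 < λ < 1/2 and let F_λ be the middle (1−2λ) Cantor set. Then F_λ² = {x² : x ∈ F_λ} is not a self-similar set: there is no affine contraction f(x) = rx + b with 0 < |r| < 1 such that f(F_λ²) ⊆ F_λ² and 1 ∈ f(F_λ²). -/
open Set

/-- The middle `1 - 2l` Cantor set. -/
noncomputable def cantor (l : ℝ) : Set ℝ :=
  Icc 0 1 \ ⋃ σ : List Bool, Ioo (wordMap l σ l) (wordMap l σ (1 - l))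

namespace CantorAux

variable {l : ℝ}

lemma wordMap_nil (x : ℝ) : wordMap l [] x = x := rfl

lemma wordMap_cons (b : Bool) (σ : List Bool) (x : ℝ) :
    wordMap l (b :: σ) x = l * wordMap l σ x + (if b then 1 - l else 0) := rfl

lemma wordMap_cons_true (σ : List Bool) (x : ℝ) :
    wordMap l (true :: σ) x = l * wordMap l σ x + (1 - l) := by
  simp [wordMap_cons]

lemma wordMap_cons_false (σ : List Bool) (x : ℝ) :
    wordMap l (false :: σ) x = l * wordMap l σ x := by
  simp [wordMap_cons]

lemma wordMap_mem_Icc (h0 : 0 < l) (h1 : l < 1/2) {x : ℝ} (hx : x ∈ Icc (0:ℝ) 1)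
    (σ : List Bool) : wordMap l σ x ∈ Icc (0:ℝ) 1 := by
  induction σ with
  | nil => exact hx
  | cons b σ ih =>
    rw [wordMap_cons]
    rcases ih with ⟨ih0, ih1⟩
    constructor
    · cases b <;> simp <;> nlinarith
    · cases b <;> simp <;> nlinarith

lemma wordMap_affine (σ : List Bool) (x : ℝ) :
    wordMap l σ x = l ^ σ.length * x + wordMap l σ 0 := by
  induction σ with
  | nil => simp [wordMap_nil]
  | cons b σ ih =>
    rw [wordMap_cons, wordMap_cons, ih]
    simp [pow_succ]
    ring

lemma wordMap_zero_nonneg (h0 : 0 < l) (h1 : l < 1/2) (σ : List Bool) :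
    0 ≤ wordMap l σ 0 :=
  (wordMap_mem_Icc h0 h1 (by constructor <;> norm_num) σ).1

lemma mem_cantor_iff {x : ℝ} :
    x ∈ cantor l ↔ x ∈ Icc (0:ℝ) 1 ∧
      ∀ σ : List Bool, x ∉ Ioo (wordMap l σ l) (wordMap l σ (1 - l)) := by
  simp only [cantor, mem_diff, mem_iUnion, not_exists]

lemma cantor_subset_Icc {x : ℝ} (hx : x ∈ cantor l) : x ∈ Icc (0:ℝ) 1 :=
  (mem_cantor_iff.mp hx).1

lemma cantor_isClosed : IsClosed (cantor l) :=
  IsClosed.sdiff isClosed_Icc (isOpen_iUnion (fun _ => isOpen_Ioo))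

lemma gap_main (hx : x ∈ cantor l) : x ∉ Ioo l (1 - l) := by
  have := (mem_cantor_iff.mp hx).2 []
  simpa [wordMap_nil] using this

lemma one_mem (h0 : 0 < l) (h1 : l < 1/2) : (1:ℝ) ∈ cantor l := by
  rw [mem_cantor_iff]
  refine ⟨by constructor <;> norm_num, fun σ h => ?_⟩
  have := (wordMap_mem_Icc h0 h1 (x := 1 - l) (by constructor <;> [linarith; linarith]) σ).2
  exact absurd h.2 (by linarith)

lemma zero_mem (h0 : 0 < l) (h1 : l < 1/2) : (0:ℝ) ∈ cantor l := by
  rw [mem_cantor_iff]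
  refine ⟨by constructor <;> norm_num, fun σ h => ?_⟩
  have := (wordMap_mem_Icc h0 h1 (x := l) (by constructor <;> [linarith; linarith]) σ).1
  exact absurd h.1 (by linarith)

lemma mul_mem (h0 : 0 < l) (h1 : l < 1/2) {x : ℝ} (hx : x ∈ cantor l) :
    l * x ∈ cantor l := by
  rcases mem_cantor_iff.mp hx with ⟨⟨hx0, hx1⟩, hgap⟩
  rw [mem_cantor_iff]
  constructor
  · constructor <;> nlinarith
  · intro σ h
    match σ with
    | [] =>
      rw [wordMap_nil, wordMap_nil] at h
      nlinarith [h.1]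
    | false :: σ' =>
      rw [wordMap_cons_false, wordMap_cons_false] at h
      exact hgap σ' ⟨by nlinarith [h.1], by nlinarith [h.2]⟩
    | true :: σ' =>
      rw [wordMap_cons_true] at h
      have hlow : 0 ≤ wordMap l σ' l :=
        (wordMap_mem_Icc h0 h1 (x := l) (by constructor <;> [linarith; linarith]) σ').1
      nlinarith [h.1]

lemma affine_mem (h0 : 0 < l) (h1 : l < 1/2) {x : ℝ} (hx : x ∈ cantor l) :
    l * x + (1 - l) ∈ cantor l := by
  rcases mem_cantor_iff.mp hx with ⟨⟨hx0, hx1⟩, hgap⟩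
  rw [mem_cantor_iff]
  constructor
  · constructor <;> nlinarith
  · intro σ h
    match σ with
    | [] =>
      rw [wordMap_nil, wordMap_nil] at h
      nlinarith [h.2]
    | false :: σ' =>
      rw [wordMap_cons_false, wordMap_cons_false] at h
      have hup : wordMap l σ' (1 - l) ≤ 1 :=
        (wordMap_mem_Icc h0 h1 (x := 1 - l) (by constructor <;> [linarith; linarith]) σ').2
      nlinarith [h.2]
    | true :: σ' =>
      rw [wordMap_cons_true, wordMap_cons_true] at h
      exact hgap σ' ⟨by nlinarith [h.1], by nlinarith [h.2]⟩

lemma scale_pow_mem (h0 : 0 < l) (h1 : l < 1/2) {x : ℝ} (hx : x ∈ cantor l) (n : ℕ) :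
    l ^ n * x ∈ cantor l := by
  induction n with
  | zero => simpa using hx
  | succ n ih =>
    have := mul_mem h0 h1 ih
    have e : l * (l ^ n * x) = l ^ (n+1) * x := by ring
    rwa [e] at this

lemma one_sub_pow_mem (h0 : 0 < l) (h1 : l < 1/2) {x : ℝ} (hx : x ∈ cantor l) (n : ℕ) :
    1 - l ^ n * (1 - x) ∈ cantor l := by
  induction n with
  | zero => simpa using hx
  | succ n ih =>
    have := affine_mem h0 h1 ih
    have e : l * (1 - l ^ n * (1 - x)) + (1 - l) = 1 - l ^ (n+1) * (1 - x) := by ring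
    rwa [e] at this

lemma wordMap_not (σ : List Bool) (y : ℝ) :
    wordMap l (σ.map (fun b => !b)) (1 - y) = 1 - wordMap l σ y := by
  induction σ with
  | nil => simp [wordMap_nil]
  | cons b σ ih =>
    cases b
    · rw [List.map_cons]
      simp only [Bool.not_false]
      rw [wordMap_cons_true, ih, wordMap_cons_false]
      ring
    · rw [List.map_cons]
      simp only [Bool.not_true]
      rw [wordMap_cons_false, ih, wordMap_cons_true]
      ring

lemma sym_mem (h0 : 0 < l) (h1 : l < 1/2) {x : ℝ} (hx : x ∈ cantor l) :
    1 - x ∈ cantor l := by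
  rcases mem_cantor_iff.mp hx with ⟨⟨hx0, hx1⟩, hgap⟩
  rw [mem_cantor_iff]
  constructor
  · constructor <;> linarith
  · intro σ h
    refine hgap (σ.map (fun b => !b)) ⟨?_, ?_⟩
    · have := wordMap_not (l := l) σ (1 - l)
      have h2 := h.2
      have e : wordMap l (σ.map (fun b => !b)) l = 1 - wordMap l σ (1 - l) := by
        have := wordMap_not (l := l) σ (1 - l)
        simpa using this
      rw [e]; linarith
    · have e : wordMap l (σ.map (fun b => !b)) (1 - l) = 1 - wordMap l σ l := by
        have := wordMap_not (l := l) σ l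
        simpa using this
      rw [e]; have h1' := h.1; linarith

lemma zoom_step (h0 : 0 < l) (h1 : l < 1/2) {x : ℝ} (hx : x ∈ cantor l)
    (hc : 1 - x ≤ l) : 1 - (1 - x) / l ∈ cantor l := by
  rcases mem_cantor_iff.mp hx with ⟨⟨hx0, hx1⟩, hgap⟩
  have hl : l ≠ 0 := ne_of_gt h0
  have hxz : x = l * (1 - (1 - x) / l) + (1 - l) := by
    field_simp
    ring
  rw [mem_cantor_iff]
  constructor
  · constructor
    · have : (1 - x) / l ≤ 1 := by
        rw [div_le_one h0]; exact hc
      linarith [this]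
    · have h1x : 0 ≤ 1 - x := by linarith
      have : 0 ≤ (1 - x) / l := div_nonneg h1x (le_of_lt h0)
      linarith
  · intro σ h
    refine hgap (true :: σ) ⟨?_, ?_⟩
    · rw [wordMap_cons_true]
      have := h.1
      nlinarith [h.1]
    · rw [wordMap_cons_true]
      have := h.2
      nlinarith [h.2]

lemma zoom_mem (h0 : 0 < l) (h1 : l < 1/2) {x : ℝ} (hx : x ∈ cantor l) (m : ℕ)
    (hc : 1 - x ≤ l ^ m) : 1 - (1 - x) / l ^ m ∈ cantor l := by
  induction m with
  | zero => simpa using hx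
  | succ m ih =>
    have hlm : (0:ℝ) < l ^ m := pow_pos h0 m
    have hc' : 1 - x ≤ l ^ m := by
      have : l ^ (m+1) ≤ l ^ m := by
        calc l ^ (m+1) = l ^ m * l := by ring
        _ ≤ l ^ m * 1 := by nlinarith
        _ = l ^ m := by ring
      linarith
    have hz := ih hc'
    have hzc : 1 - (1 - (1 - x) / l ^ m) ≤ l := by
      have : (1 - x) / l ^ m ≤ l := by
        rw [div_le_iff₀ hlm]
        calc 1 - x ≤ l ^ (m+1) := hc
        _ = l * l ^ m := by ring
      linarith
    have hzs := zoom_step h0 h1 hz hzc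
    have e : 1 - (1 - (1 - (1 - x) / l ^ m)) / l = 1 - (1 - x) / l ^ (m + 1) := by
      have h1' : (1 - (1 - (1 - x) / l ^ m)) = (1 - x) / l ^ m := by ring
      rw [h1', div_div, ← pow_succ]
    rwa [e] at hzs

lemma wordMap_mem (h0 : 0 < l) (h1 : l < 1/2) {x : ℝ} (hx : x ∈ cantor l) (σ : List Bool) :
    wordMap l σ x ∈ cantor l := by
  induction σ with
  | nil => exact hx
  | cons b σ ih =>
    cases b
    · rw [wordMap_cons_false]; exact mul_mem h0 h1 ih
    · rw [wordMap_cons_true]; exact affine_mem h0 h1 ih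

lemma l_mem (h0 : 0 < l) (h1 : l < 1/2) : l ∈ cantor l := by
  have := mul_mem h0 h1 (one_mem h0 h1)
  simpa using this

lemma one_sub_l_mem (h0 : 0 < l) (h1 : l < 1/2) : 1 - l ∈ cantor l :=
  sym_mem h0 h1 (l_mem h0 h1)

lemma endpointL_mem (h0 : 0 < l) (h1 : l < 1/2) (σ : List Bool) :
    wordMap l σ l ∈ cantor l := wordMap_mem h0 h1 (l_mem h0 h1) σ

lemma endpointR_mem (h0 : 0 < l) (h1 : l < 1/2) (σ : List Bool) :
    wordMap l σ (1 - l) ∈ cantor l := wordMap_mem h0 h1 (one_sub_l_mem h0 h1) σ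

lemma gap_cover (h0 : 0 < l) (h1 : l < 1/2) {a b : ℝ} (ha : a ∈ cantor l)
    (hb : b ∈ cantor l) (hab : a < b)
    (hemp : ∀ y ∈ cantor l, y ∉ Ioo a b) :
    ∃ σ, a = wordMap l σ l ∧ b = wordMap l σ (1 - l) := by
  set z := (a + b) / 2 with hzdef
  have hza : a < z := by rw [hzdef]; linarith
  have hzb : z < b := by rw [hzdef]; linarith
  have hzI : z ∈ Icc (0:ℝ) 1 := by
    have := cantor_subset_Icc ha
    have := cantor_subset_Icc hb
    constructor
    · rw [hzdef]; rcases cantor_subset_Icc ha with ⟨h,_⟩; rcases cantor_subset_Icc hb with ⟨h',_⟩; linarith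
    · rw [hzdef]; rcases cantor_subset_Icc ha with ⟨_,h⟩; rcases cantor_subset_Icc hb with ⟨_,h'⟩; linarith
  have hznot : z ∉ cantor l := fun hz => hemp z hz ⟨hza, hzb⟩
  have : ∃ σ, z ∈ Ioo (wordMap l σ l) (wordMap l σ (1 - l)) := by
    by_contra hcon
    push_neg at hcon
    exact hznot (mem_cantor_iff.mpr ⟨hzI, fun σ h => hcon σ h⟩)
  obtain ⟨σ, hgz⟩ := this
  have hg1 := endpointL_mem h0 h1 σ
  have hg2 := endpointR_mem h0 h1 σ
  have e1 : wordMap l σ l ≤ a := by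
    by_contra hcon
    push_neg at hcon
    exact hemp _ hg1 ⟨hcon, lt_trans hgz.1 hzb⟩
  have e2 : b ≤ wordMap l σ (1 - l) := by
    by_contra hcon
    push_neg at hcon
    exact hemp _ hg2 ⟨lt_trans hza hgz.2, hcon⟩
  have ea : a = wordMap l σ l := by
    rcases lt_or_eq_of_le e1 with h | h
    · exact absurd ⟨h, lt_trans hza hgz.2⟩ ((mem_cantor_iff.mp ha).2 σ)
    · exact h.symm
  have eb : b = wordMap l σ (1 - l) := by
    rcases lt_or_eq_of_le e2 with h | h
    · exact absurd ⟨lt_trans hgz.1 hzb, h⟩ ((mem_cantor_iff.mp hb).2 σ)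
    · exact h
  exact ⟨σ, ea, eb⟩

lemma hole_ratio (h0 : 0 < l) (h1 : l < 1/2) {a b : ℝ} (ha : a ∈ cantor l)
    (hb : b ∈ cantor l) (h1a : 1 - l ≤ a) (hab : a < b)
    (hemp : ∀ y ∈ cantor l, y ∉ Ioo a b) :
    b * (1 - l + l^2) ≤ a * (1 - l^2) := by
  obtain ⟨σ, ea, eb⟩ := gap_cover h0 h1 ha hb hab hemp
  match σ with
  | [] =>
    rw [wordMap_nil] at ea
    rw [ea] at h1a
    linarith
  | false :: σ' =>
    rw [wordMap_cons_false] at ea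
    rw [ea] at h1a
    have : wordMap l σ' l ≤ 1 :=
      (wordMap_mem_Icc h0 h1 (x := l) (by constructor <;> [linarith; linarith]) σ').2
    nlinarith
  | true :: σ' =>
    rw [wordMap_cons_true] at ea
    rw [wordMap_cons_true] at eb
    have hA := wordMap_affine (l := l) σ' l
    have hB := wordMap_affine (l := l) σ' (1 - l)
    set W := wordMap l σ' 0 with hW
    set k := σ'.length with hk
    have hW0 : 0 ≤ W := wordMap_zero_nonneg h0 h1 σ'
    have hpk : (0:ℝ) < l ^ k := pow_pos h0 k
    have hpk1 : l ^ k ≤ 1 := by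
      apply pow_le_one₀ (le_of_lt h0); linarith
    rw [ea, eb, hA, hB]
    nlinarith [mul_nonneg (mul_nonneg (le_of_lt h0) (by linarith : (0:ℝ) ≤ 1 - 2*l))
        (mul_nonneg hW0 (le_of_lt h0)),
      mul_nonneg (mul_nonneg (le_of_lt h0) (by linarith : (0:ℝ) ≤ 1 - 2*l))
        (mul_nonneg (by linarith : (0:ℝ) ≤ 1 - l^k) (by linarith : (0:ℝ) ≤ 1 - l))]
lemma exists_pow_bracket (h0 : 0 < l) (h1 : l < 1/2) {ρ : ℝ} (hρ0 : 0 < ρ) (hρ1 : ρ ≤ 1) :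
    ∃ j : ℕ, l ^ (j+1) < ρ ∧ ρ ≤ l ^ j := by
  have hl1 : l < 1 := by linarith
  obtain ⟨n, hn⟩ := exists_pow_lt_of_lt_one hρ0 hl1
  have hP : ∃ m, l ^ (m+1) < ρ := by
    refine ⟨n, lt_of_le_of_lt ?_ hn⟩
    calc l ^ (n+1) = l ^ n * l := by ring
    _ ≤ l ^ n * 1 := by nlinarith [pow_pos h0 n]
    _ = l ^ n := by ring
  classical
  let j := Nat.find hP
  refine ⟨j, Nat.find_spec hP, ?_⟩
  rcases Nat.eq_zero_or_pos j with hj | hj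
  · rw [hj]; simpa using hρ1
  · have := Nat.find_min hP (m := j - 1) (by omega)
    push_neg at this
    have e : j - 1 + 1 = j := by omega
    rwa [e] at this

lemma window_T_compact (h0 : 0 < l) (h1 : l < 1/2) (C : Set ℝ) (hC : IsClosed C) :
    IsCompact (cantor l ∩ C) := by
  apply IsCompact.of_isClosed_subset isCompact_Icc
  · exact IsClosed.inter cantor_isClosed hC
  · exact fun x hx => cantor_subset_Icc hx.1

/-- Linear window lemma: for `0 < ρ < 1` there are `v ∈ F ∩ [1-l, 1]` and `j` with
`l^(j+1) < ρ v ≤ l^j (1-l)`. -/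
lemma exists_window_lin (h0 : 0 < l) (h1 : l < 1/2) {ρ : ℝ} (hρ0 : 0 < ρ) (hρ1 : ρ < 1) :
    ∃ v ∈ cantor l, ∃ j : ℕ, 1 - l ≤ v ∧ l ^ (j+1) < ρ * v ∧ ρ * v ≤ l ^ j * (1 - l) := by
  obtain ⟨j, hjl, hju⟩ := exists_pow_bracket h0 h1 hρ0 (le_of_lt hρ1)
  by_cases hc1 : ρ ≤ l ^ j * (1 - l)
  · exact ⟨1, one_mem h0 h1, j, by linarith, by simpa using hjl, by simpa using hc1⟩
  push_neg at hc1
  by_cases hc2 : l ^ (j+1) < ρ * (1 - l)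
  · refine ⟨1 - l, one_sub_l_mem h0 h1, j, le_refl _, hc2, ?_⟩
    have : ρ * (1 - l) ≤ l ^ j * (1 - l) := by nlinarith
    linarith
  push_neg at hc2
  -- crossing case
  set T := cantor l ∩ {y | 1 - l ≤ y ∧ ρ * y ≤ l ^ (j+1)} with hT
  have hTne : (1 - l) ∈ T := ⟨one_sub_l_mem h0 h1, le_refl _, hc2⟩
  have hTcpt : IsCompact T := by
    apply window_T_compact h0 h1
    exact IsClosed.inter (isClosed_le continuous_const continuous_id)
      (isClosed_le (continuous_const.mul continuous_id) continuous_const)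
  have hys := hTcpt.sSup_mem ⟨_, hTne⟩
  set ys := sSup T with hysdef
  obtain ⟨hysF, hys1l, hysle⟩ := hys
  have hysub : ∀ y ∈ T, y ≤ ys := fun y hy => le_csSup hTcpt.bddAbove hy
  have hys1 : ys < 1 := by
    rcases lt_or_eq_of_le (cantor_subset_Icc hysF).2 with h | h
    · exact h
    · exfalso; rw [h] at hysle; nlinarith
  set Q := {y | y ∈ cantor l ∧ ys < y} with hQ
  have hQ1 : (1:ℝ) ∈ Q := ⟨one_mem h0 h1, hys1⟩
  have hQbd : BddBelow Q := ⟨0, fun y hy => (cantor_subset_Icc hy.1).1⟩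
  set qs := sInf Q with hqs
  have hqsF : qs ∈ cantor l := by
    have h1' : qs ∈ closure Q := csInf_mem_closure ⟨1, hQ1⟩ hQbd
    have h2' : closure Q ⊆ cantor l := by
      apply IsClosed.closure_subset_iff cantor_isClosed |>.mpr
      exact fun y hy => hy.1
    exact h2' h1'
  have hqsge : ys ≤ qs := le_csInf ⟨1, hQ1⟩ (fun y hy => le_of_lt hy.2)
  have hqsle1 : qs ≤ 1 := csInf_le hQbd hQ1
  have hnotT : ∀ y, y ∈ cantor l → ys < y → l ^ (j+1) < ρ * y := by
    intro y hyF hyy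
    by_contra hcon
    push_neg at hcon
    have : y ∈ T := ⟨hyF, by linarith, hcon⟩
    exact absurd (hysub y this) (not_le.mpr hyy)
  rcases eq_or_lt_of_le hqsge with heq | hlt
  · -- accumulation case
    have hεpos : 0 < (l ^ j * (1 - l) - l ^ (j+1)) / ρ := by
      apply div_pos _ hρ0
      have e : l ^ (j+1) = l ^ j * l := pow_succ l j
      nlinarith [mul_pos (pow_pos h0 j) (by linarith : (0:ℝ) < 1 - 2*l), e]
    have : sInf Q < ys + (l ^ j * (1 - l) - l ^ (j+1)) / ρ := by
      rw [← hqs, ← heq]; linarith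
    obtain ⟨y', hy'Q, hy'lt⟩ := exists_lt_of_csInf_lt ⟨1, hQ1⟩ this
    refine ⟨y', hy'Q.1, j, by linarith [hy'Q.2], hnotT y' hy'Q.1 hy'Q.2, ?_⟩
    have h1' : ρ * y' < ρ * ys + (l ^ j * (1 - l) - l ^ (j+1)) := by
      have := mul_lt_mul_of_pos_left hy'lt hρ0
      calc ρ * y' < ρ * (ys + (l ^ j * (1 - l) - l ^ (j+1)) / ρ) := this
      _ = ρ * ys + (l ^ j * (1 - l) - l ^ (j+1)) := by field_simp
    linarith
  · -- hole case
    have hemp : ∀ y ∈ cantor l, y ∉ Ioo ys qs := by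
      intro y hy hyIoo
      have : y ∈ Q := ⟨hy, hyIoo.1⟩
      exact absurd (csInf_le hQbd this) (not_le.mpr hyIoo.2)
    have hr := hole_ratio h0 h1 hysF hqsF hys1l hlt hemp
    refine ⟨qs, hqsF, j, by linarith, hnotT qs hqsF hlt, ?_⟩
    -- ρ qs (1-l+l²) ≤ ρ ys (1-l²) ≤ l^{j+1} (1-l²) ≤ l^j (1-l)(1-l+l²)
    have hpos : (0:ℝ) < 1 - l + l^2 := by nlinarith
    rw [← mul_le_mul_iff_of_pos_right hpos]
    calc ρ * qs * (1 - l + l^2) = ρ * (qs * (1 - l + l^2)) := by ring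
    _ ≤ ρ * (ys * (1 - l^2)) := by
        apply mul_le_mul_of_nonneg_left hr (le_of_lt hρ0)
    _ = (ρ * ys) * (1 - l^2) := by ring
    _ ≤ l ^ (j+1) * (1 - l^2) := by
        have := mul_le_mul_of_nonneg_right hysle (by nlinarith : (0:ℝ) ≤ 1 - l^2)
        linarith
    _ ≤ l ^ j * (1 - l) * (1 - l + l^2) := by
        have hpk : (0:ℝ) < l ^ j := pow_pos h0 j
        have e : l ^ (j+1) = l ^ j * l := by ring
        rw [e]
        nlinarith [mul_nonneg (mul_nonneg hpk.le (by linarith : (0:ℝ) ≤ 1 - l))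
          (by linarith : (0:ℝ) ≤ 1 - 2*l)]
set_option maxHeartbeats 1600000 in
/-- Quadratic window lemma. -/
lemma exists_window_sq (h0 : 0 < l) (h1 : l < 1/2) {ρ : ℝ} (hρ0 : 0 < ρ) (hρ1 : ρ < 1) :
    ∃ y ∈ cantor l, ∃ j : ℕ, 1 - l ≤ y ∧ l ^ (j+1) < ρ * y^2 ∧ ρ * y^2 < l ^ j * (1 - l) := by
  obtain ⟨j, hjl, hju⟩ := exists_pow_bracket h0 h1 hρ0 (le_of_lt hρ1)
  by_cases hc1 : ρ < l ^ j * (1 - l)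
  · exact ⟨1, one_mem h0 h1, j, by linarith, by simpa using hjl, by simpa using hc1⟩
  push_neg at hc1
  by_cases hc2 : l ^ (j+1) < ρ * (1 - l)^2
  · refine ⟨1 - l, one_sub_l_mem h0 h1, j, le_refl _, hc2, ?_⟩
    have h2 : ρ * (1-l)^2 ≤ l ^ j * (1-l)^2 := by nlinarith
    have h3 : l ^ j * (1-l)^2 < l ^ j * (1 - l) := by
      have hpk : (0:ℝ) < l ^ j := pow_pos h0 j
      nlinarith [mul_pos hpk (mul_pos h0 (by linarith : (0:ℝ) < 1 - l))]
    linarith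
  push_neg at hc2
  -- crossing case
  set T := cantor l ∩ {y | 1 - l ≤ y ∧ ρ * y^2 ≤ l ^ (j+1)} with hT
  have hTne : (1 - l) ∈ T := ⟨one_sub_l_mem h0 h1, le_refl _, hc2⟩
  have hTcpt : IsCompact T := by
    apply window_T_compact h0 h1
    exact IsClosed.inter (isClosed_le continuous_const continuous_id)
      (isClosed_le (continuous_const.mul (continuous_pow 2)) continuous_const)
  have hys := hTcpt.sSup_mem ⟨_, hTne⟩
  set ys := sSup T with hysdef
  obtain ⟨hysF, hys1l, hysle⟩ := hys
  have hysub : ∀ y ∈ T, y ≤ ys := fun y hy => le_csSup hTcpt.bddAbove hy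
  have hys0 : 0 ≤ ys := by linarith
  have hys1 : ys ≤ 1 := (cantor_subset_Icc hysF).2
  have hyslt1 : ys < 1 := by
    rcases lt_or_eq_of_le hys1 with h | h
    · exact h
    · exfalso; rw [h] at hysle; nlinarith
  set Q := {y | y ∈ cantor l ∧ ys < y} with hQ
  have hQ1 : (1:ℝ) ∈ Q := ⟨one_mem h0 h1, hyslt1⟩
  have hQbd : BddBelow Q := ⟨0, fun y hy => (cantor_subset_Icc hy.1).1⟩
  set qs := sInf Q with hqs
  have hqsF : qs ∈ cantor l := by
    have h1' : qs ∈ closure Q := csInf_mem_closure ⟨1, hQ1⟩ hQbd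
    have h2' : closure Q ⊆ cantor l := by
      apply IsClosed.closure_subset_iff cantor_isClosed |>.mpr
      exact fun y hy => hy.1
    exact h2' h1'
  have hqsge : ys ≤ qs := le_csInf ⟨1, hQ1⟩ (fun y hy => le_of_lt hy.2)
  have hnotT : ∀ y, y ∈ cantor l → ys < y → l ^ (j+1) < ρ * y^2 := by
    intro y hyF hyy
    by_contra hcon
    push_neg at hcon
    have : y ∈ T := ⟨hyF, by linarith, hcon⟩
    exact absurd (hysub y this) (not_le.mpr hyy)
  have hDpos : 0 < l ^ j * (1 - l) - l ^ (j+1) := by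
    have e : l ^ (j+1) = l ^ j * l := pow_succ l j
    nlinarith [mul_pos (pow_pos h0 j) (by linarith : (0:ℝ) < 1 - 2*l), e]
  rcases eq_or_lt_of_le hqsge with heq | hlt
  · -- accumulation case
    set ε := min 1 ((l ^ j * (1 - l) - l ^ (j+1)) / (3*ρ)) with hε
    have hεpos : 0 < ε := by
      apply lt_min one_pos
      apply div_pos hDpos (by linarith)
    have : sInf Q < ys + ε := by
      rw [← hqs, ← heq]; linarith
    obtain ⟨y', hy'Q, hy'lt⟩ := exists_lt_of_csInf_lt ⟨1, hQ1⟩ this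
    refine ⟨y', hy'Q.1, j, by linarith [hy'Q.2], hnotT y' hy'Q.1 hy'Q.2, ?_⟩
    have hy'0 : 0 ≤ y' := (cantor_subset_Icc hy'Q.1).1
    have hsq : y'^2 < (ys + ε)^2 := by nlinarith [hy'Q.2]
    have hεle : ε ≤ (l ^ j * (1 - l) - l ^ (j+1)) / (3*ρ) := min_le_right _ _
    have hε1 : ε ≤ 1 := min_le_left _ _
    have hexp : ρ * (ys + ε)^2 ≤ ρ * ys^2 + 3 * ρ * ε := by
      nlinarith [mul_nonneg (mul_nonneg hρ0.le hεpos.le) (by linarith : (0:ℝ) ≤ 1 - ys),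
        mul_nonneg (mul_nonneg hρ0.le hεpos.le) (by linarith : (0:ℝ) ≤ 1 - ε)]
    have h3ε : 3 * ρ * ε ≤ l ^ j * (1 - l) - l ^ (j+1) := by
      have := mul_le_mul_of_nonneg_left hεle (by linarith : (0:ℝ) ≤ 3*ρ)
      calc 3 * ρ * ε ≤ 3*ρ * ((l ^ j * (1 - l) - l ^ (j+1)) / (3*ρ)) := this
      _ = l ^ j * (1 - l) - l ^ (j+1) := by field_simp
    have : ρ * y'^2 < ρ * (ys + ε)^2 := by nlinarith
    linarith
  · -- hole case
    have hemp : ∀ y ∈ cantor l, y ∉ Ioo ys qs := by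
      intro y hy hyIoo
      have : y ∈ Q := ⟨hy, hyIoo.1⟩
      exact absurd (csInf_le hQbd this) (not_le.mpr hyIoo.2)
    have hr := hole_ratio h0 h1 hysF hqsF hys1l hlt hemp
    have hqsF' := hqsF
    have hlow := hnotT qs hqsF hlt
    have hqs1l : 1 - l ≤ qs := by linarith
    have hqs0 : 0 ≤ qs := by linarith
    refine ⟨qs, hqsF', j, hqs1l, hlow, ?_⟩
    clear_value T ys Q qs
    clear hT hysdef hQ hqs hTne hTcpt hysub hQ1 hQbd hqsF hnotT hemp hqsF' hysF
    have hAA : (0:ℝ) < 1 - l + l^2 := by nlinarith [sq_nonneg l]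
    have hpos2 : (0:ℝ) < (1 - l + l^2)^2 := by positivity
    have hsq : qs^2 * (1 - l + l^2)^2 ≤ ys^2 * (1 - l^2)^2 := by
      have h1' : 0 ≤ qs * (1 - l + l^2) := mul_nonneg hqs0 hAA.le
      have h2' := mul_self_le_mul_self h1' hr
      have e1 : qs * (1 - l + l^2) * (qs * (1 - l + l^2)) = qs^2 * (1 - l + l^2)^2 := by ring
      have e2 : ys * (1 - l^2) * (ys * (1 - l^2)) = ys^2 * (1 - l^2)^2 := by ring
      rw [e1, e2] at h2'
      exact h2'
    have step1 : ρ * (qs^2 * (1 - l + l^2)^2) ≤ ρ * (ys^2 * (1 - l^2)^2) :=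
      mul_le_mul_of_nonneg_left hsq hρ0.le
    have step2 : (ρ * ys^2) * (1 - l^2)^2 ≤ l ^ (j+1) * (1 - l^2)^2 := by
      have := mul_le_mul_of_nonneg_right hysle (by nlinarith [sq_nonneg (1-l^2)] : (0:ℝ) ≤ (1 - l^2)^2)
      linarith
    have step3 : l ^ (j+1) * (1 - l^2)^2 < l ^ j * (1 - l) * (1 - l + l^2)^2 := by
      have hpk : (0:ℝ) < l ^ j := pow_pos h0 j
      have e : l ^ (j+1) = l ^ j * l := pow_succ l j
      rw [e]
      have hP : 0 < (1 - 2*l) * (1 - l - l^3) := by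
        apply mul_pos (by linarith)
        nlinarith [mul_pos h0 h0, mul_pos (mul_pos h0 h0) h0]
      nlinarith [mul_pos hpk hP]
    have big : ρ * qs^2 * (1 - l + l^2)^2 < l ^ j * (1 - l) * (1 - l + l^2)^2 := by
      have e3 : ρ * (qs^2 * (1 - l + l^2)^2) = ρ * qs^2 * (1 - l + l^2)^2 := by ring
      have e4 : ρ * (ys^2 * (1 - l^2)^2) = (ρ * ys^2) * (1 - l^2)^2 := by ring
      linarith [step1, step2, step3, e3, e4]
    exact lt_of_mul_lt_mul_right big hpos2.le
set_option maxHeartbeats 1600000 in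
/-- Core contradiction, positive-ratio case. -/
lemma coreA (h0 : 0 < l) (h1 : l < 1/2) {s w : ℝ} (hs0 : 0 < s) (hs1 : s < 1)
    (hH : ∀ x ∈ (fun t : ℝ => t ^ 2) '' cantor l,
      1 - s * (1 - x) ∈ (fun t : ℝ => t ^ 2) '' cantor l)
    (hw : w ∈ cantor l) {k : ℕ}
    (hlow : l ^ (k+1) < s * (1 - w)) (hup : s * (1 - w) ≤ l ^ k * (1 - l)) : False := by
  have hw01 := cantor_subset_Icc hw
  have hv0 : 0 < 1 - w := by nlinarith [pow_pos h0 (k+1)]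
  have hv1 : 1 - w ≤ 1 := by linarith [hw01.1]
  set c := s * (1 - w) with hc
  have hc0 : 0 < c := lt_trans (pow_pos h0 (k+1)) hlow
  -- choose n
  have hεc : 0 < 2*(c - l^(k+1))/c := by
    apply div_pos _ hc0
    linarith
  obtain ⟨n, hn⟩ := exists_pow_lt_of_lt_one hεc (by linarith : l < 1)
  have hn' : l ^ n * c < 2*(c - l^(k+1)) := by
    have := mul_lt_mul_of_pos_right hn hc0
    calc l ^ n * c < 2*(c - l^(k+1))/c * c := this
    _ = 2*(c - l^(k+1)) := by field_simp
  have hpn : (0:ℝ) < l ^ n := pow_pos h0 n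
  have hpn1 : l ^ n ≤ 1 := pow_le_one₀ h0.le (by linarith)
  set τ := l ^ n * (1 - w) with hτ
  have hτ0 : 0 < τ := mul_pos hpn hv0
  have hτ1 : τ ≤ 1 := by nlinarith
  have hτlen : τ ≤ l ^ n := by nlinarith
  -- the point p and its image
  have hp : 1 - τ ∈ cantor l := by
    have := one_sub_pow_mem h0 h1 hw n
    rwa [← hτ] at this
  have hpE : (1 - τ)^2 ∈ (fun t : ℝ => t ^ 2) '' cantor l := ⟨1 - τ, hp, rfl⟩
  obtain ⟨u, huF, huq⟩ := hH _ hpE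
  have hu01 := cantor_subset_Icc huF
  have hu0 : 0 ≤ u := hu01.1
  have huqb : u ^ 2 = 1 - s * (1 - (1 - τ)^2) := by simpa using huq
  have huq' : u^2 = 1 - s*(2*τ - τ^2) := by
    rw [huqb]; ring
  have hsτ1 : s * τ ≤ 1 := by nlinarith
  -- (a) 1 - u < s * τ
  have ha : 1 - u < s * τ := by
    by_contra hcon
    push_neg at hcon
    have h2 : u ≤ 1 - s*τ := by linarith
    have h3 := mul_self_le_mul_self hu0 h2
    nlinarith [mul_pos (mul_pos hs0 (mul_pos hτ0 hτ0)) (show (0:ℝ) < 1 - s by linarith)]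
  -- (b) s*τ*(2-τ) ≤ 2*(1-u)
  have hb : s * τ * (2 - τ) ≤ 2 * (1 - u) := by
    by_contra hcon
    push_neg at hcon
    have hA1 : s * τ * (2 - τ) ≤ 1 := by nlinarith [sq_nonneg (1 - τ)]
    have h2 : 1 - s*τ*(2-τ)/2 < u := by linarith
    have h20 : 0 ≤ 1 - s*τ*(2-τ)/2 := by linarith
    have h3 := mul_self_lt_mul_self h20 h2
    nlinarith [sq_nonneg (s*τ*(2-τ))]
  -- key bounds
  have epow : l ^ (n+k) = l ^ n * l ^ k := pow_add l n k
  have epow2 : l ^ (n+k+1) = l ^ n * l ^ (k+1) := by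
    rw [show n+k+1 = n + (k+1) by omega, pow_add]
  have key1 : 1 - u < l ^ (n+k) * (1 - l) := by
    have h2 : s * τ = l ^ n * c := by rw [hτ, hc]; ring
    have h3 : l ^ n * c ≤ l ^ n * (l ^ k * (1-l)) :=
      mul_le_mul_of_nonneg_left hup hpn.le
    rw [epow]
    calc 1 - u < s * τ := ha
    _ = l ^ n * c := h2
    _ ≤ l ^ n * (l ^ k * (1-l)) := h3
    _ = l ^ n * l ^ k * (1 - l) := by ring
  have key2 : l ^ (n+k+1) < 1 - u := by
    -- s*τ*(2-τ) ≥ l^n * (c*(2-l^n)) > l^n * (2*l^(k+1))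
    have h2 : l ^ n * (c*(2 - l ^ n)) ≤ s * τ * (2 - τ) := by
      have e : s * τ = l ^ n * c := by rw [hτ, hc]; ring
      rw [e]
      have h4 : c * (2 - l ^ n) ≤ c * (2 - τ) := by
        apply mul_le_mul_of_nonneg_left _ hc0.le
        linarith
      calc l ^ n * (c*(2 - l ^ n)) ≤ l ^ n * (c * (2 - τ)) :=
        mul_le_mul_of_nonneg_left h4 hpn.le
      _ = l ^ n * c * (2 - τ) := by ring
    have h3 : l ^ n * (2 * l^(k+1)) < l ^ n * (c*(2 - l ^ n)) := by
      apply mul_lt_mul_of_pos_left _ hpn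
      nlinarith
    rw [epow2]
    nlinarith
  -- zoom in
  have hum : 1 - u ≤ l ^ (n+k) := by nlinarith [pow_pos h0 (n+k)]
  have hx' := zoom_mem h0 h1 huF (n+k) hum
  have hpnk : (0:ℝ) < l ^ (n+k) := pow_pos h0 (n+k)
  have hio : (1 - (1 - u)/l^(n+k)) ∈ Ioo l (1 - l) := by
    constructor
    · have : (1 - u)/l^(n+k) < 1 - l := by
        rw [div_lt_iff₀ hpnk]
        calc 1 - u < l ^ (n+k) * (1-l) := key1
        _ = (1 - l) * l ^ (n+k) := by ring
      linarith
    · have : l < (1 - u)/l^(n+k) := by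
        rw [lt_div_iff₀ hpnk]
        calc l * l ^ (n+k) = l ^ (n+k+1) := by ring
        _ < 1 - u := key2
      linarith
  exact gap_main hx' hio

set_option maxHeartbeats 1600000 in
/-- Core contradiction, negative-ratio case. -/
lemma coreB (h0 : 0 < l) (h1 : l < 1/2) {s : ℝ} (hs0 : 0 < s) (hs1 : s < 1)
    (hH : ∀ x ∈ (fun t : ℝ => t ^ 2) '' cantor l,
      1 - s * x ∈ (fun t : ℝ => t ^ 2) '' cantor l) : False := by
  have hρ0 : 0 < s/2 := by linarith
  have hρ1 : s/2 < 1 := by linarith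
  obtain ⟨y, hyF, j, hy1l, hlow, hup⟩ := exists_window_sq h0 h1 hρ0 hρ1
  have hy01 := cantor_subset_Icc hyF
  have hy0 : 0 ≤ y := hy01.1
  have hy1 : y ≤ 1 := hy01.2
  set ρ := s/2 with hρ
  have hρy : 0 < ρ * y^2 := lt_trans (pow_pos h0 (j+1)) hlow
  -- choose n
  have hεc : 0 < (l^j*(1-l) - ρ*y^2)/(ρ*y^2) := by
    apply div_pos _ hρy
    linarith
  obtain ⟨n, hn⟩ := exists_pow_lt_of_lt_one hεc (by linarith : l < 1)
  have hn' : l ^ n * (ρ*y^2) < l^j*(1-l) - ρ*y^2 := by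
    have := mul_lt_mul_of_pos_right hn hρy
    calc l ^ n * (ρ*y^2) < (l^j*(1-l) - ρ*y^2)/(ρ*y^2) * (ρ*y^2) := this
    _ = l^j*(1-l) - ρ*y^2 := div_mul_cancel₀ _ hρy.ne'
  have hpn : (0:ℝ) < l ^ n := pow_pos h0 n
  have hpn1 : l ^ n ≤ 1 := pow_le_one₀ h0.le (by linarith)
  -- the point
  have hpt : l ^ n * y ∈ cantor l := scale_pow_mem h0 h1 hyF n
  have hptE : (l ^ n * y)^2 ∈ (fun t : ℝ => t ^ 2) '' cantor l := ⟨_, hpt, rfl⟩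
  obtain ⟨u, huF, huq⟩ := hH _ hptE
  have hu01 := cantor_subset_Icc huF
  have hu0 : 0 ≤ u := hu01.1
  set x := l ^ n * l ^ n with hx
  have hx0 : 0 < x := mul_pos hpn hpn
  have hx1 : x ≤ 1 := by nlinarith
  set D := s * (x * y^2) with hD
  have hD0 : 0 < D := by
    rw [hD]
    apply mul_pos hs0
    apply mul_pos hx0
    nlinarith [pow_pos h0 (j+1), hlow]
  have hy2 : y^2 ≤ 1 := by nlinarith
  have hDx : D ≤ x := by
    rw [hD]
    nlinarith [mul_nonneg hx0.le (show (0:ℝ) ≤ 1 - s*y^2 by nlinarith)]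
  have huqb : u ^ 2 = 1 - s * (l ^ n * y) ^ 2 := by simpa using huq
  have huq' : u^2 = 1 - D := by
    rw [huqb, hD, hx]; ring
  -- (a) D ≤ 2*(1-u)
  have ha : D ≤ 2*(1 - u) := by
    by_contra hcon
    push_neg at hcon
    have hD1 : D ≤ 1 := le_trans hDx hx1
    have h2 : 1 - D/2 < u := by linarith
    have h20 : 0 ≤ 1 - D/2 := by linarith
    have h3 := mul_self_lt_mul_self h20 h2
    nlinarith [sq_nonneg D]
  -- (b) 2*(1-u) ≤ D*(1+x)
  have hb : 2*(1-u) ≤ D*(1+x) := by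
    by_contra hcon
    push_neg at hcon
    have h2 : u < 1 - D*(1+x)/2 := by linarith
    have h20 : 0 ≤ u := hu0
    have h3 := mul_self_lt_mul_self h20 h2
    -- contradiction: u^2 = 1-D but (1 - D(1+x)/2)^2 ≤ 1 - D since D*x ≥ D^2(1+x)^2/4
    have hkey : D*(1+x)*(D*(1+x)) ≤ 4*(D*x) := by
      have e1 : D*(1+x) ≤ x*(1+x) := by nlinarith
      have e2 : x*(1+x) ≤ 2*x := by nlinarith
      have e3 : D*(1+x) ≤ 2*x := le_trans e1 e2
      have e4 : 0 ≤ D*(1+x) := by nlinarith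
      nlinarith
    nlinarith
  -- key bounds
  have epow : l ^ (n+n+j) = x * l ^ j := by
    rw [hx, show n+n+j = n + (n + j) by omega, pow_add, pow_add]; ring
  have epow2 : l ^ (n+n+j+1) = x * l ^ (j+1) := by
    rw [hx, show n+n+j+1 = n + (n + (j+1)) by omega, pow_add, pow_add]; ring
  have key2 : l ^ (n+n+j+1) < 1 - u := by
    rw [epow2]
    have h2 : x * l ^ (j+1) < x * (ρ * y^2) := by
      apply mul_lt_mul_of_pos_left hlow hx0
    have h3 : D = 2 * (x * (ρ * y^2)) := by rw [hD, hρ]; ring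
    nlinarith
  have key1 : 1 - u < l ^ (n+n+j) * (1 - l) := by
    rw [epow]
    -- 2(1-u) ≤ D(1+x) = 2xρy²(1+x) and ρy²(1+x) < l^j(1-l)
    have h2 : ρ*y^2*(1+x) < l^j*(1-l) := by
      have hxn : x ≤ l ^ n := by nlinarith
      nlinarith [mul_le_mul_of_nonneg_right hxn hρy.le]
    have h3 : D*(1+x) = 2 * (x * (ρ*y^2*(1+x))) := by rw [hD, hρ]; ring
    have h4 : x * (ρ*y^2*(1+x)) < x * (l^j*(1-l)) :=
      mul_lt_mul_of_pos_left h2 hx0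
    nlinarith
  -- zoom in
  have hum : 1 - u ≤ l ^ (n+n+j) := by nlinarith [pow_pos h0 (n+n+j)]
  have hx' := zoom_mem h0 h1 huF (n+n+j) hum
  have hpnk : (0:ℝ) < l ^ (n+n+j) := pow_pos h0 (n+n+j)
  have hio : (1 - (1 - u)/l^(n+n+j)) ∈ Ioo l (1 - l) := by
    constructor
    · have : (1 - u)/l^(n+n+j) < 1 - l := by
        rw [div_lt_iff₀ hpnk]
        calc 1 - u < l ^ (n+n+j) * (1-l) := key1
        _ = (1 - l) * l ^ (n+n+j) := by ring
      linarith
    · have : l < (1 - u)/l^(n+n+j) := by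
        rw [lt_div_iff₀ hpnk]
        calc l * l ^ (n+n+j) = l ^ (n+n+j+1) := by ring
        _ < 1 - u := key2
      linarith
  exact gap_main hx' hio

end CantorAux

set_option maxHeartbeats 800000 in
/-- `F_λ²` is not self-similar: no affine contraction maps it into itself
with `1` in the image. -/
theorem stmt4 (l : ℝ) (h0 : 0 < l) (h1 : l < 1 / 2) :
    ¬ ∃ r b : ℝ, 0 < |r| ∧ |r| < 1 ∧
      (fun x : ℝ => r * x + b) '' ((fun x : ℝ => x ^ 2) '' cantor l) ⊆
        (fun x : ℝ => x ^ 2) '' cantor l ∧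
      (1 : ℝ) ∈ (fun x : ℝ => r * x + b) '' ((fun x : ℝ => x ^ 2) '' cantor l) := by
  rintro ⟨r, b, hr0, hr1, hsub, h1mem⟩
  obtain ⟨x₀, hx₀E, hx₀eq⟩ := h1mem
  simp only at hx₀eq
  have hEsub : ∀ z ∈ (fun x : ℝ => x ^ 2) '' cantor l, 0 ≤ z ∧ z ≤ 1 := by
    rintro z ⟨x, hx, rfl⟩
    obtain ⟨hx0, hx1⟩ := CantorAux.cantor_subset_Icc hx
    constructor
    · show (0:ℝ) ≤ x ^ 2
      positivity
    · show x ^ 2 ≤ 1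
      nlinarith
  have h1E : (1:ℝ) ∈ (fun x : ℝ => x ^ 2) '' cantor l :=
    ⟨1, CantorAux.one_mem h0 h1, by norm_num⟩
  have h0E : (0:ℝ) ∈ (fun x : ℝ => x ^ 2) '' cantor l :=
    ⟨0, CantorAux.zero_mem h0 h1, by norm_num⟩
  have hmap : ∀ x ∈ (fun x : ℝ => x ^ 2) '' cantor l,
      r * x + b ∈ (fun x : ℝ => x ^ 2) '' cantor l := by
    intro x hx
    exact hsub ⟨x, hx, rfl⟩
  have hrne : r ≠ 0 := by
    intro h
    rw [h] at hr0
    simp at hr0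
  rcases hrne.lt_or_gt with hneg | hpos
  · -- r < 0
    have hs0 : 0 < -r := by linarith
    have hs1 : -r < 1 := by rwa [abs_of_neg hneg] at hr1
    have hb1 : b = 1 := by
      have hble : b ≤ 1 := by
        have := (hEsub _ (hmap 0 h0E)).2
        simpa using this
      have hx₀0 : 0 ≤ x₀ := (hEsub _ hx₀E).1
      nlinarith [mul_nonneg (neg_nonneg.mpr hneg.le) hx₀0]
    refine CantorAux.coreB h0 h1 hs0 hs1 ?_
    intro x hx
    have := hmap x hx
    rw [hb1] at this
    have e : 1 - -r * x = r * x + 1 := by ring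
    rwa [e]
  · -- r > 0
    have hr1' : r < 1 := by rwa [abs_of_pos hpos] at hr1
    have hx₀le : x₀ ≤ 1 := (hEsub _ hx₀E).2
    have hrb : r + b ≤ 1 := by
      have := (hEsub _ (hmap 1 h1E)).2
      simpa using this
    have hb : b = 1 - r := by
      nlinarith [mul_le_mul_of_nonneg_left hx₀le hpos.le]
    have hH : ∀ x ∈ (fun x : ℝ => x ^ 2) '' cantor l,
        1 - r * (1 - x) ∈ (fun x : ℝ => x ^ 2) '' cantor l := by
      intro x hx
      have := hmap x hx
      rw [hb] at this
      have e : 1 - r * (1 - x) = r * x + (1 - r) := by ring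
      rwa [e]
    obtain ⟨v, hvF, j, hv1l, hlow, hup⟩ := CantorAux.exists_window_lin h0 h1 hpos hr1'
    have hwmem : 1 - v ∈ cantor l := CantorAux.sym_mem h0 h1 hvF
    have e : 1 - (1 - v) = v := by ring
    exact CantorAux.coreA h0 h1 hpos hr1' hH hwmem (k := j)
      (by rw [e]; exact hlow) (by rw [e]; exact hup)
end

section
/- Let 1/3 ≤ λ < 1/2, let F_λ be the middle (1−2λ) Cantor set, and let F'_λ = F_λ ∩ [1−λ, 1]. Then {x²/y : x ∈ F'_λ, y ∈ F'_λ} = [(1 − λ)², 1/(1 − λ)]. -/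
open Set

private lemma wordMap_cons (l : ℝ) (b : Bool) (σ : List Bool) (x : ℝ) :
    wordMap l (b :: σ) x = l * wordMap l σ x + (if b then 1 - l else 0) := rfl

private lemma wordMap_mem_Icc {l : ℝ} (hl0 : 0 ≤ l) (hl1 : l ≤ 1) (σ : List Bool) {x : ℝ}
    (hx : x ∈ Icc (0:ℝ) 1) : wordMap l σ x ∈ Icc (0:ℝ) 1 := by
  induction σ with
  | nil => exact hx
  | cons b σ ih =>
    rw [wordMap_cons]
    obtain ⟨h1, h2⟩ := ih
    cases b <;> simp only [if_true, if_false, Bool.false_eq_true] <;>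
      constructor <;> nlinarith

private lemma key1 {l A c L : ℝ} (hl1 : 1/3 ≤ l) (hl2 : l ≤ 1/2) (hA0 : 0 ≤ A) (hA1 : A ≤ 1)
    (hc : 1 - l ≤ c) (hL : 0 ≤ L) :
    A^2 * (c + (1-l)*L) ≤ (A + l*L)^2 * (c + l*L) := by
  have hcore : 1 - 2*l ≤ 2*l*c := by
    nlinarith [mul_nonneg (sub_nonneg.2 hl1) (sub_nonneg.2 hl2)]
  have h1 : A * (A * (1 - 2*l)) ≤ A * (2*l*c) := by
    have : A * (1 - 2*l) ≤ 2*l*c := by nlinarith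
    exact mul_le_mul_of_nonneg_left this hA0
  have hc0 : 0 ≤ c := by linarith
  have hl0 : (0:ℝ) ≤ l := by linarith
  nlinarith [mul_nonneg hL (sub_nonneg.2 h1),
    mul_nonneg (mul_nonneg (mul_nonneg hL hL) hA0) (mul_nonneg hl0 hl0),
    mul_nonneg (mul_nonneg (mul_nonneg hL hL) hc0) (mul_nonneg hl0 hl0),
    mul_nonneg (mul_nonneg (mul_nonneg hL hl0) (mul_nonneg hL hl0)) (mul_nonneg hL hl0)]

private lemma key2 {l a c L : ℝ} (hl1 : 1/3 ≤ l) (hl2 : l ≤ 1/2) (ha : 1 - l ≤ a)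
    (hc0 : 0 ≤ c) (hc1 : c ≤ 1) (hL : 0 ≤ L) :
    (a + (1-l)*L)^2 * c ≤ (a + l*L)^2 * (c + L) := by
  have hl0 : (0:ℝ) ≤ l := by linarith
  have ha0 : (0:ℝ) ≤ a := by linarith
  have ha2 : 0 ≤ a - 2*(1-2*l) := by linarith
  have ha3 : 0 ≤ 2*l*a - (1-2*l) := by
    nlinarith [mul_nonneg (sub_nonneg.2 hl1) (sub_nonneg.2 hl2)]
  have h1 : (1-2*l)*(2*a+L) ≤ (a+l*L)^2 := by
    nlinarith [mul_nonneg ha0 ha2, mul_nonneg hL ha3,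
      mul_nonneg (mul_nonneg hL hl0) (mul_nonneg hL hl0)]
  have h2 : c*((1-2*l)*(2*a+L)) ≤ (1-2*l)*(2*a+L) := by
    have hpos : 0 ≤ (1-2*l)*(2*a+L) := by nlinarith
    nlinarith
  have h3 : 0 ≤ (a+l*L)^2 - c*((1-2*l)*(2*a+L)) := by nlinarith
  nlinarith [mul_nonneg hL h3]

private def SInv (l t a c : ℝ) (k : ℕ) : Prop :=
  1 - l ≤ a ∧ a + l^(k+1) ≤ 1 ∧ 1 - l ≤ c ∧ c + l^(k+1) ≤ 1 ∧
    a^2 ≤ t * (c + l^(k+1)) ∧ t * c ≤ (a + l^(k+1))^2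

private lemma step_lemma {l t : ℝ} (h0 : 1/3 ≤ l) (h1 : l < 1/2) (ht : 0 < t)
    (k : ℕ) (a c : ℝ) (h : SInv l t a c k) :
    ∃ a' c', (a' = a ∨ a' = a + (1-l)*l^(k+1)) ∧
      (c' = c ∨ c' = c + (1-l)*l^(k+1)) ∧ SInv l t a' c' (k+1) := by
  obtain ⟨ha1, ha2, hc1, hc2, hlow, hhigh⟩ := h
  have hl0 : (0:ℝ) < l := by linarith
  set L := l^(k+1) with hLdef
  have hL : 0 < L := pow_pos hl0 _
  have hLL : l^(k+1+1) = l*L := by rw [pow_succ]; ring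
  have hlL : l*L ≤ L := by nlinarith
  have ha0 : (0:ℝ) < a := by linarith
  have hc0 : (0:ℝ) < c := by linarith
  have haa : a ≤ 1 := by nlinarith
  have hcc : c ≤ 1 := by nlinarith
  have hg1 : (0:ℝ) < c + (1-l)*L := by nlinarith
  have hg2 : (0:ℝ) < c + l*L := by nlinarith
  have hg3 : (0:ℝ) < c + L := by nlinarith
  have h1lL : 0 ≤ (1-l)*L := by nlinarith
  have hsum : (1-l)*L + l*L = L := by ring
  have hlL0 : 0 ≤ l*L := by positivity
  rcases le_or_gt (t*(c+(1-l)*L)) ((a+l*L)^2) with hc1' | hc1'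
  · -- child (0,1)
    refine ⟨a, c+(1-l)*L, Or.inl rfl, Or.inr rfl,
      ha1, ?_, by linarith, ?_, ?_, ?_⟩
    · rw [hLL]; linarith
    · rw [hLL]; linarith
    · rw [hLL]
      calc a^2 ≤ t*(c+L) := hlow
        _ = t*(c+(1-l)*L + l*L) := by ring
    · rw [hLL]; exact hc1'
  · rcases le_or_gt (t*c) ((a+l*L)^2) with hc2' | hc2'
    · -- child (0,0)
      refine ⟨a, c, Or.inl rfl, Or.inl rfl, ha1, ?_, hc1, ?_, ?_, ?_⟩
      · rw [hLL]; linarith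
      · rw [hLL]; linarith
      · rw [hLL]
        have hk := key1 (A := a) h0 h1.le ha0.le haa hc1 hL.le
        have hmul : a^2*(c+(1-l)*L) < (t*(c+l*L))*(c+(1-l)*L) :=
          calc a^2*(c+(1-l)*L) ≤ (a+l*L)^2*(c+l*L) := hk
            _ < (t*(c+(1-l)*L))*(c+l*L) := mul_lt_mul_of_pos_right hc1' hg2
            _ = (t*(c+l*L))*(c+(1-l)*L) := by ring
        exact le_of_lt ((mul_lt_mul_iff_left₀ hg1).mp hmul)
      · rw [hLL]; exact hc2'
    · rcases le_or_gt (t*(c+(1-l)*L)) ((a+L)^2) with hc3' | hc3'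
      · -- child (1,1)
        refine ⟨a+(1-l)*L, c+(1-l)*L, Or.inr rfl, Or.inr rfl,
          by linarith, ?_, by linarith, ?_, ?_, ?_⟩
        · rw [hLL]; linarith
        · rw [hLL]; linarith
        · rw [hLL]
          have hk := key2 h0 h1.le ha1 hc0.le hcc hL.le
          have hmul : (a+(1-l)*L)^2 * c < (t*(c+L))*c :=
            calc (a+(1-l)*L)^2 * c ≤ (a+l*L)^2*(c+L) := hk
              _ < (t*c)*(c+L) := mul_lt_mul_of_pos_right hc2' hg3
              _ = (t*(c+L))*c := by ring
          have h5 : (a+(1-l)*L)^2 < t*(c+L) := (mul_lt_mul_iff_left₀ hc0).mp hmul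
          calc (a+(1-l)*L)^2 ≤ t*(c+L) := h5.le
            _ = t*(c+(1-l)*L + l*L) := by ring
        · rw [hLL]
          calc t*(c+(1-l)*L) ≤ (a+L)^2 := hc3'
            _ = (a+(1-l)*L + l*L)^2 := by ring
      · -- child (1,0)
        refine ⟨a+(1-l)*L, c, Or.inr rfl, Or.inl rfl,
          by linarith, ?_, hc1, ?_, ?_, ?_⟩
        · rw [hLL]; linarith
        · rw [hLL]; linarith
        · rw [hLL]
          have hk := key1 (A := a+(1-l)*L) h0 h1.le (by linarith) (by linarith) hc1 hL.le
          have hmul : (a+(1-l)*L)^2*(c+(1-l)*L) < (t*(c+l*L))*(c+(1-l)*L) :=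
            calc (a+(1-l)*L)^2*(c+(1-l)*L) ≤ (a+(1-l)*L+l*L)^2*(c+l*L) := hk
              _ = (a+L)^2*(c+l*L) := by ring
              _ < (t*(c+(1-l)*L))*(c+l*L) := mul_lt_mul_of_pos_right hc3' hg2
              _ = (t*(c+l*L))*(c+(1-l)*L) := by ring
          exact le_of_lt ((mul_lt_mul_iff_left₀ hg1).mp hmul)
        · rw [hLL]
          calc t*c ≤ (a+L)^2 := hhigh
            _ = (a+(1-l)*L + l*L)^2 := by ring

private lemma limit_exists {l : ℝ} (hl0 : 0 < l) (hl1 : l < 1) (a : ℕ → ℝ)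
    (hstep : ∀ k, a (k+1) = a k ∨ a (k+1) = a k + (1-l)*l^(k+1))
    (hb : ∀ k, a k + l^(k+1) ≤ 1) :
    ∃ x, ∀ k, a k ≤ x ∧ x ≤ a k + l^(k+1) := by
  have hpow : ∀ k : ℕ, (0:ℝ) < l^k := fun k => pow_pos hl0 k
  have mono : Monotone a := by
    apply monotone_nat_of_le_succ
    intro k
    rcases hstep k with h | h
    · exact h.ge
    · nlinarith [hpow (k+1)]
  have key : ∀ k m, a (k+m) + l^(k+m+1) ≤ a k + l^(k+1) := by
    intro k m
    induction m with
    | zero => simp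
    | succ n ihn =>
      have e : l^(k+n+1+1) = l^(k+n+1)*l := pow_succ l _
      have e2 : k + (n+1) = (k+n)+1 := by omega
      rw [e2]
      rcases hstep (k+n) with h | h
      · rw [h]
        nlinarith [hpow (k+n+1)]
      · rw [h]
        have : (1-l)*l^(k+n+1) + l^(k+n+1)*l = l^(k+n+1) := by ring
        nlinarith [ihn]
  have hbdd : BddAbove (Set.range a) := by
    refine ⟨1, ?_⟩
    rintro y ⟨j, rfl⟩
    nlinarith [hb j, hpow (j+1)]
  refine ⟨⨆ k, a k, fun k => ⟨le_ciSup hbdd k, ciSup_le fun j => ?_⟩⟩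
  rcases le_total j k with h | h
  · exact (mono h).trans (by nlinarith [hpow (k+1)])
  · have := key k (j - k)
    rw [Nat.add_sub_cancel' h] at this
    nlinarith [hpow (j+1)]

private lemma avoid {l : ℝ} (hl0 : 0 < l) (hl : l < 1/2) (σ : List Bool) :
    ∀ (a : ℕ → ℝ) (x : ℝ), (a 0 = 0 ∨ a 0 = 1 - l) →
      (∀ k, a (k+1) = a k ∨ a (k+1) = a k + (1-l) * l^(k+1)) →
      (∀ k, a k ≤ x ∧ x ≤ a k + l^(k+1)) →
      x ∉ Ioo (wordMap l σ l) (wordMap l σ (1 - l)) := by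
  induction σ with
  | nil =>
    intro a x h0 hstep hx hmem
    obtain ⟨hxl, hxu⟩ := hmem
    simp only [wordMap, List.foldr] at hxl hxu
    rcases h0 with h | h
    · have := (hx 0).2
      rw [h, pow_one] at this
      linarith
    · have := (hx 0).1
      rw [h] at this
      linarith
  | cons b σ ih =>
    intro a x h0 hstep hx hmem
    rw [wordMap_cons, wordMap_cons] at hmem
    obtain ⟨hxl, hxu⟩ := hmem
    have hW1 := wordMap_mem_Icc hl0.le (by linarith) σ (x := l) ⟨hl0.le, by linarith⟩
    have hW2 := wordMap_mem_Icc hl0.le (by linarith) σ (x := 1-l) ⟨by linarith, by linarith⟩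
    have hx0 : a 0 ≤ x := (hx 0).1
    have hx1 : x ≤ a 0 + l := by have := (hx 0).2; rwa [pow_one] at this
    -- match / mismatch cases
    by_cases hmatch : a 0 = (if b then 1 - l else 0)
    · -- matching first digit: reduce via shifted sequence
      set a' : ℕ → ℝ := fun k => (a (k+1) - a 0)/l with ha'
      have h0' : a' 0 = 0 ∨ a' 0 = 1 - l := by
        rcases hstep 0 with h | h
        · left; simp [ha', h]
        · right
          simp only [ha', h, pow_one]
          field_simp
          ring
      have hstep' : ∀ k, a' (k+1) = a' k ∨ a' (k+1) = a' k + (1-l)*l^(k+1) := by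
        intro k
        rcases hstep (k+1) with h | h
        · left; simp [ha', h]
        · right
          simp only [ha', h]
          have hp : l^(k+1+1) = l^(k+1)*l := pow_succ l _
          field_simp
          ring
      have hx' : ∀ k, a' k ≤ (x - a 0)/l ∧ (x - a 0)/l ≤ a' k + l^(k+1) := by
        intro k
        obtain ⟨u1, u2⟩ := hx (k+1)
        rw [pow_succ] at u2
        constructor
        · exact div_le_div_of_nonneg_right (by linarith) hl0.le
        · have e2 : a' k + l^(k+1) = (a (k+1) - a 0 + l^(k+1)*l)/l := by
            rw [add_div]
            congr 1
            rw [mul_div_cancel_right₀ _ hl0.ne']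
          rw [e2]
          exact div_le_div_of_nonneg_right (by linarith) hl0.le
      rw [← hmatch] at hxl hxu
      refine ih a' ((x - a 0)/l) h0' hstep' hx' ⟨?_, ?_⟩
      · rw [lt_div_iff₀ hl0]; linarith
      · rw [div_lt_iff₀ hl0]; linarith
    · -- mismatched first digit
      cases b with
      | true =>
        norm_num at hxl hmatch
        have h00 : a 0 = 0 := by tauto
        rw [h00] at hx1
        nlinarith [hW1.1, mul_nonneg hl0.le hW1.1]
      | false =>
        norm_num at hxu hmatch
        have h00 : a 0 = 1 - l := by tauto
        rw [h00] at hx0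
        nlinarith [hW2.1, mul_le_of_le_one_right hl0.le hW2.2]

private lemma mem_cantor {l x : ℝ} (hl0 : 0 < l) (hl : l < 1/2) (a : ℕ → ℝ)
    (h0 : a 0 = 0 ∨ a 0 = 1 - l)
    (hstep : ∀ k, a (k+1) = a k ∨ a (k+1) = a k + (1-l) * l^(k+1))
    (hx : ∀ k, a k ≤ x ∧ x ≤ a k + l^(k+1)) : x ∈ cantor l := by
  have hx0 := (hx 0).1
  have hx1 := (hx 0).2
  rw [pow_one] at hx1
  constructor
  · constructor
    · rcases h0 with h | h <;> rw [h] at hx0 <;> linarith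
    · rcases h0 with h | h <;> rw [h] at hx1 <;> linarith
  · intro hmem
    simp only [mem_iUnion] at hmem
    obtain ⟨σ, hσ⟩ := hmem
    exact avoid hl0 hl σ a x h0 hstep hx hσ

set_option maxHeartbeats 1000000 in
theorem stmt8 (l : ℝ) (h0 : 1 / 3 ≤ l) (h1 : l < 1 / 2) :
    Set.image2 (fun x y : ℝ => x ^ 2 / y)
        (cantor l ∩ Icc (1 - l) 1) (cantor l ∩ Icc (1 - l) 1) =
      Icc ((1 - l) ^ 2) (1 / (1 - l)) := by
  have hl0 : (0:ℝ) < l := by linarith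
  have h1l : (0:ℝ) < 1 - l := by linarith
  have h0' : 1/3 ≤ l := h0
  ext t
  simp only [Set.mem_image2, mem_inter_iff, mem_Icc]
  constructor
  · rintro ⟨x, ⟨hxC, hx1, hx2⟩, y, ⟨hyC, hy1, hy2⟩, rfl⟩
    have hy0 : (0:ℝ) < y := by linarith
    constructor
    · rw [le_div_iff₀ hy0]
      nlinarith
    · rw [div_le_iff₀ hy0]
      have hq : (0:ℝ) < 1/(1-l) := by positivity
      have e1 : 1/(1-l)*(1-l) ≤ 1/(1-l)*y := mul_le_mul_of_nonneg_left hy1 hq.le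
      have e2 : 1/(1-l)*(1-l) = 1 := by field_simp
      nlinarith
  · rintro ⟨ht1, ht2⟩
    classical
    have ht : 0 < t := lt_of_lt_of_le (by positivity) ht1
    have htt : t ≤ 2 := by
      have : 1/(1-l) ≤ 2 := by rw [div_le_iff₀ h1l]; linarith
      linarith
    have init : SInv l t (1-l) (1-l) 0 := by
      refine ⟨le_refl _, by rw [pow_one]; linarith, le_refl _, by rw [pow_one]; linarith, ?_, ?_⟩
      · rw [pow_one]
        calc (1-l)^2 ≤ t := ht1
          _ = t*(1-l+l) := by ring
      · rw [pow_one]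
        have e : t*(1-l) ≤ (1/(1-l))*(1-l) := mul_le_mul_of_nonneg_right ht2 h1l.le
        rw [one_div_mul_cancel h1l.ne'] at e
        calc t*(1-l) ≤ 1 := e
          _ = (1-l+l)^2 := by ring
    choose f g hf hg hInvStep using step_lemma h0' h1 ht
    set S : ℕ → ℝ × ℝ := fun k => Nat.rec ((1-l, 1-l) : ℝ × ℝ)
      (fun n p => if h : SInv l t p.1 p.2 n then (f n p.1 p.2 h, g n p.1 p.2 h) else p) k
      with hSdef
    have hSs : ∀ k, S (k+1) = if h : SInv l t (S k).1 (S k).2 k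
        then (f k (S k).1 (S k).2 h, g k (S k).1 (S k).2 h) else S k := fun k => rfl
    have hInv : ∀ k, SInv l t (S k).1 (S k).2 k := by
      intro k
      induction k with
      | zero => exact init
      | succ n ihn =>
        rw [hSs n, dif_pos ihn]
        exact hInvStep n _ _ ihn
    have hstepA : ∀ k, (S (k+1)).1 = (S k).1 ∨ (S (k+1)).1 = (S k).1 + (1-l)*l^(k+1) := by
      intro k
      rw [hSs k, dif_pos (hInv k)]
      exact hf k _ _ (hInv k)
    have hstepC : ∀ k, (S (k+1)).2 = (S k).2 ∨ (S (k+1)).2 = (S k).2 + (1-l)*l^(k+1) := by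
      intro k
      rw [hSs k, dif_pos (hInv k)]
      exact hg k _ _ (hInv k)
    obtain ⟨x, hxk⟩ := limit_exists hl0 (by linarith) (fun k => (S k).1) hstepA
      (fun k => (hInv k).2.1)
    obtain ⟨y, hyk⟩ := limit_exists hl0 (by linarith) (fun k => (S k).2) hstepC
      (fun k => (hInv k).2.2.2.1)
    have hS01 : (S 0).1 = 1 - l := rfl
    have hS02 : (S 0).2 = 1 - l := rfl
    clear_value S
    have hx1l : 1 - l ≤ x := by have := (hxk 0).1; rwa [hS01] at this
    have hxle1 : x ≤ 1 := by
      have := (hxk 0).2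
      have h2 := (hInv 0).2.1
      linarith
    have hy1l : 1 - l ≤ y := by have := (hyk 0).1; rwa [hS02] at this
    have hyle1 : y ≤ 1 := by
      have := (hyk 0).2
      have h2 := (hInv 0).2.2.2.1
      linarith
    have hxc : x ∈ cantor l := mem_cantor hl0 h1 _ (Or.inr hS01) hstepA hxk
    have hyc : y ∈ cantor l := mem_cantor hl0 h1 _ (Or.inr hS02) hstepC hyk
    clear hSs hstepA hstepC hf hg hInvStep init hSdef f g
    have key : ∀ k : ℕ, |x^2 - t*y| ≤ 6*l^(k+1) := by
      intro k
      obtain ⟨i1, i2, i3, i4, i5, i6⟩ := hInv k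
      obtain ⟨xa, xb⟩ := hxk k
      obtain ⟨ya, yb⟩ := hyk k
      have hε0 : 0 < l^(k+1) := pow_pos hl0 _
      have hε1 : l^(k+1) ≤ 1 := pow_le_one₀ hl0.le (by linarith)
      have hA0 : 0 < (S k).1 := by linarith
      have hA1 : (S k).1 ≤ 1 := by linarith
      have hC1 : (S k).2 ≤ 1 := by linarith
      have hx2 : x^2 ≤ ((S k).1 + l^(k+1))^2 := by nlinarith
      have hx2' : (S k).1^2 ≤ x^2 := by nlinarith
      have hty : t*(S k).2 ≤ t*y := mul_le_mul_of_nonneg_left ya ht.le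
      have hty' : t*y ≤ t*((S k).2 + l^(k+1)) := mul_le_mul_of_nonneg_left yb ht.le
      have htε : t*l^(k+1) ≤ 2*l^(k+1) := mul_le_mul_of_nonneg_right htt hε0.le
      have hAε : (S k).1 * l^(k+1) ≤ l^(k+1) := by
        have := mul_le_mul_of_nonneg_right hA1 hε0.le
        linarith
      have hεε : l^(k+1) * l^(k+1) ≤ l^(k+1) := by
        have := mul_le_mul_of_nonneg_right hε1 hε0.le
        linarith
      rw [abs_le]
      constructor <;> linarith
    have heq : x^2 = t*y := by
      by_contra hne
      have hδ : 0 < |x^2 - t*y| := abs_pos.2 (sub_ne_zero.2 hne)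
      obtain ⟨n, hn⟩ := exists_pow_lt_of_lt_one (show (0:ℝ) < |x^2 - t*y|/6 by positivity)
        (show l < 1 by linarith)
      have hp : l^(n+1) ≤ l^n := pow_le_pow_of_le_one hl0.le (by linarith) (Nat.le_succ n)
      rw [lt_div_iff₀ (by norm_num : (0:ℝ) < 6)] at hn
      have := key n
      linarith
    refine ⟨x, ⟨hxc, hx1l, hxle1⟩, y, ⟨hyc, hy1l, hyle1⟩, ?_⟩
    have hy0 : y ≠ 0 := by intro h; rw [h] at hy1l; linarith
    rw [heq, mul_div_assoc, div_self hy0, mul_one]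
end
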